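/- arXiv:2401.14763 — 4 statements merged into one kernel-verified Lean document; each statement's English description precedes it below -/
import Mathlib

section
/- Every non-∗-marked rule of πULL is admissible or derivable in πULL_↷: if Γ; Δ ⊢ P :: Λ is derivable in πULL (using the full rule set, including idL, ⊥R, ⊥L, ⅋R, ⅋L, copyR, ?R, ?L, cutRR, cutLL, cut?R, cut?L), then Γ; Δ ⊢_↷ P :: Λ is derivable in πULL_↷ (using only the ∗-marked rules together with the moving rules ↶ and ↷). -/
/-- ULL propositions (session types). -/
inductive STyp : Type where
  | one : STyp
  | bot : STyp
  | tensor : STyp → STyp → STyp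
  | lolli : STyp → STyp → STyp
  | oplus : Finset ℕ → (ℕ → STyp) → STyp
  | withT : Finset ℕ → (ℕ → STyp) → STyp
  | bang : STyp → STyp
  | quest : STyp → STyp

/-- Duality of ULL propositions. -/
def STyp.dual : STyp → STyp
  | .one => .bot
  | .bot => .one
  | .tensor A B => .lolli A B.dual
  | .lolli A B => .tensor A B.dual
  | .oplus I f => .withT I fun i => (f i).dual
  | .withT I f => .oplus I fun i => (f i).dual
  | .bang A => .quest A.dual
  | .quest A => .bang A.dual

/-- A ⅋ B := dual(A) ⊸ B. -/
def STyp.parr (A B : STyp) : STyp := .lolli A.dual B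

/-- π-calculus processes. -/
inductive Proc : Type where
  | nil : Proc
  | nu : ℕ → Proc → Proc
  | par : Proc → Proc → Proc
  | out : ℕ → ℕ → Proc → Proc        -- x̄⟨y⟩.P
  | inp : ℕ → ℕ → Proc → Proc        -- x(y).P
  | sel : ℕ → ℕ → Proc → Proc        -- x ◁ ℓ.P
  | bra : ℕ → Finset ℕ → (ℕ → Proc) → Proc  -- x ▷ {i : P_i}_{i∈I}
  | rep : ℕ → ℕ → Proc → Proc        -- !x(y).P
  | fwd : ℕ → ℕ → Proc               -- [x↔y]
  | closeS : ℕ → Proc → Proc         -- x̄⟨⟩.P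
  | closeR : ℕ → Proc → Proc         -- x().P

/-- Free names. -/
def Proc.fn : Proc → Set ℕ
  | .nil => ∅
  | .nu x P => P.fn \ {x}
  | .par P Q => P.fn ∪ Q.fn
  | .out x y P => {x, y} ∪ P.fn
  | .inp x y P => {x} ∪ (P.fn \ {y})
  | .sel x _ P => {x} ∪ P.fn
  | .bra x I Ps => {x} ∪ ⋃ i ∈ I, (Ps i).fn
  | .rep x y P => {x} ∪ (P.fn \ {y})
  | .fwd x y => {x, y}
  | .closeS x P => {x} ∪ P.fn
  | .closeR x P => {x} ∪ P.fn

/-- Substitution on names. -/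
def subName (y x n : ℕ) : ℕ := if n = x then y else n

/-- `P.subst y x` is the (Barendregt-convention) substitution P{y/x} of y for
free occurrences of x in P. -/
def Proc.subst : Proc → ℕ → ℕ → Proc
  | .nil, _, _ => .nil
  | .nu z P, y, x => if z = x then .nu z P else .nu z (P.subst y x)
  | .par P Q, y, x => .par (P.subst y x) (Q.subst y x)
  | .out a b P, y, x => .out (subName y x a) (subName y x b) (P.subst y x)
  | .inp a z P, y, x =>
      if z = x then .inp (subName y x a) z P else .inp (subName y x a) z (P.subst y x)
  | .sel a l P, y, x => .sel (subName y x a) l (P.subst y x)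
  | .bra a I Ps, y, x => .bra (subName y x a) I fun i => (Ps i).subst y x
  | .rep a z P, y, x =>
      if z = x then .rep (subName y x a) z P else .rep (subName y x a) z (P.subst y x)
  | .fwd a b, y, x => .fwd (subName y x a) (subName y x b)
  | .closeS a P, y, x => .closeS (subName y x a) (P.subst y x)
  | .closeR a P, y, x => .closeR (subName y x a) (P.subst y x)

/-- Structural congruence: the least congruence satisfying the axioms of Fig. 1 (top). -/
inductive SC : Proc → Proc → Prop where
  | cutSymm : SC (.nu x (.par P Q)) (.nu x (.par Q P))
  | cutAssocL : x ∉ Q.fn → y ∉ P.fn →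
      SC (.nu x (.par P (.nu y (.par Q R)))) (.nu y (.par Q (.nu x (.par P R))))
  | cutAssocR : x ∉ R.fn → y ∉ P.fn →
      SC (.nu x (.par P (.nu y (.par Q R)))) (.nu y (.par (.nu x (.par P Q)) R))
  | refl : SC P P
  | symm : SC P Q → SC Q P
  | trans : SC P Q → SC Q R → SC P R
  | nu : SC P Q → SC (.nu x P) (.nu x Q)
  | parL : SC P P' → SC (.par P Q) (.par P' Q)
  | parR : SC Q Q' → SC (.par P Q) (.par P Q')
  | out : SC P Q → SC (.out x y P) (.out x y Q)
  | inp : SC P Q → SC (.inp x y P) (.inp x y Q)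
  | sel : SC P Q → SC (.sel x l P) (.sel x l Q)
  | bra : (∀ i, SC (Ps i) (Qs i)) → SC (.bra x I Ps) (.bra x I Qs)
  | rep : SC P Q → SC (.rep x y P) (.rep x y Q)
  | closeS : SC P Q → SC (.closeS x P) (.closeS x Q)
  | closeR : SC P Q → SC (.closeR x P) (.closeR x Q)

/-- Reduction (β-rules, κ-rules, and closure rules). -/
inductive Red : Proc → Proc → Prop where
  | betaId : x ≠ y → Red (.nu x (.par P (.fwd x y))) (P.subst y x)
  | betaClose : Red (.nu x (.par (.closeS x .nil) (.closeR x Q))) Q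
  | betaSend :
      Red (.nu x (.par (.nu y (.out x y (.par P1 P2))) (.inp x z Q)))
          (.nu x (.par P2 (.nu y (.par P1 (Q.subst y z)))))
  | betaSel : j ∈ I →
      Red (.nu x (.par (.sel x j P) (.bra x I Qs))) (.nu x (.par P (Qs j)))
  | betaServ :
      Red (.nu x (.par (.nu y (.out x y P)) (.rep x z Q)))
          (.nu x (.par (.nu y (.par P (Q.subst y z))) (.rep x z Q)))
  | betaWeaken : x ∉ P.fn → Red (.nu x (.par P (.rep x z Q))) P
  | kClose : Red (.nu y (.par P (.closeR x Q))) (.closeR x (.nu y (.par P Q)))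
  | kSendR : y ∈ Q2.fn →
      Red (.nu y (.par P (.nu z (.out x z (.par Q1 Q2)))))
          (.nu z (.out x z (.par Q1 (.nu y (.par P Q2)))))
  | kSendL : y ∈ Q1.fn →
      Red (.nu y (.par P (.nu z (.out x z (.par Q1 Q2)))))
          (.nu z (.out x z (.par (.nu y (.par P Q1)) Q2)))
  | kRecv : Red (.nu y (.par P (.inp x z Q))) (.inp x z (.nu y (.par P Q)))
  | kSel : Red (.nu y (.par P (.sel x l Q))) (.sel x l (.nu y (.par P Q)))
  | kBra : Red (.nu y (.par (.bra x I Ps) Q)) (.bra x I fun i => .nu y (.par (Ps i) Q))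
  | par : Red Q Q' → Red (.par P Q) (.par P Q')
  | res : Red P Q → Red (.nu y P) (.nu y Q)
  | sc : SC P P' → Red P' Q' → SC Q' Q → Red P Q

/-- Typing contexts: multisets of assignments x:A. -/
abbrev Ctx : Type := Multiset (ℕ × STyp)

/-- Duality extended to contexts. -/
def Ctx.dual (Δ : Ctx) : Ctx := Δ.map fun p => (p.1, p.2.dual)

/-- The πULL type system, generalized by a predicate `pr` that the right-hand
linear context of the conclusion of every rule instance (hence every sequent
in a derivation) must satisfy. -/
inductive ULLg (pr : Ctx → Prop) : Ctx → Ctx → Proc → Ctx → Prop where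
  | idR : pr {(y, A)} → ULLg pr Γ {(x, A)} (.fwd x y) {(y, A)}
  | idL : pr 0 → ULLg pr Γ ((x, A) ::ₘ {(y, A.dual)}) (.fwd x y) 0
  | oneR : pr {(x, .one)} → ULLg pr Γ 0 (.closeS x .nil) {(x, .one)}
  | oneL : pr Λ → ULLg pr Γ Δ P Λ → ULLg pr Γ ((x, .one) ::ₘ Δ) (.closeR x P) Λ
  | botR : pr ((x, .bot) ::ₘ Λ) → ULLg pr Γ Δ P Λ →
      ULLg pr Γ Δ (.closeR x P) ((x, .bot) ::ₘ Λ)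
  | botL : pr 0 → ULLg pr Γ {(x, .bot)} (.closeS x .nil) 0
  | tensorR : pr ((x, .tensor A B) ::ₘ (Λ + Λ')) →
      ULLg pr Γ Δ P ((y, A) ::ₘ Λ) → ULLg pr Γ Δ' Q ((x, B) ::ₘ Λ') →
      ULLg pr Γ (Δ + Δ') (.nu y (.out x y (.par P Q))) ((x, .tensor A B) ::ₘ (Λ + Λ'))
  | tensorL : pr Λ → ULLg pr Γ ((y, A) ::ₘ (x, B) ::ₘ Δ) P Λ →
      ULLg pr Γ ((x, .tensor A B) ::ₘ Δ) (.inp x y P) Λ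
  | parrR : pr ((x, A.parr B) ::ₘ Λ) → ULLg pr Γ Δ P ((y, A) ::ₘ (x, B) ::ₘ Λ) →
      ULLg pr Γ Δ (.inp x y P) ((x, A.parr B) ::ₘ Λ)
  | parrL : pr (Λ + Λ') → ULLg pr Γ ((y, A) ::ₘ Δ) P Λ → ULLg pr Γ ((x, B) ::ₘ Δ') Q Λ' →
      ULLg pr Γ ((x, A.parr B) ::ₘ (Δ + Δ')) (.nu y (.out x y (.par P Q))) (Λ + Λ')
  | lolliR : pr ((x, .lolli A B) ::ₘ Λ) → ULLg pr Γ ((y, A) ::ₘ Δ) P ((x, B) ::ₘ Λ) →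
      ULLg pr Γ Δ (.inp x y P) ((x, .lolli A B) ::ₘ Λ)
  | lolliL : pr (Λ + Λ') → ULLg pr Γ Δ P ((y, A) ::ₘ Λ) → ULLg pr Γ ((x, B) ::ₘ Δ') Q Λ' →
      ULLg pr Γ ((x, .lolli A B) ::ₘ (Δ + Δ')) (.nu y (.out x y (.par P Q))) (Λ + Λ')
  | oplusR : pr ((x, .oplus I As) ::ₘ Λ) → j ∈ I → ULLg pr Γ Δ P ((x, As j) ::ₘ Λ) →
      ULLg pr Γ Δ (.sel x j P) ((x, .oplus I As) ::ₘ Λ)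
  | oplusL : pr Λ → (∀ i ∈ I, ULLg pr Γ ((x, As i) ::ₘ Δ) (Ps i) Λ) →
      ULLg pr Γ ((x, .oplus I As) ::ₘ Δ) (.bra x I Ps) Λ
  | withR : pr ((x, .withT I As) ::ₘ Λ) → (∀ i ∈ I, ULLg pr Γ Δ (Ps i) ((x, As i) ::ₘ Λ)) →
      ULLg pr Γ Δ (.bra x I Ps) ((x, .withT I As) ::ₘ Λ)
  | withL : pr Λ → j ∈ I → ULLg pr Γ ((x, As j) ::ₘ Δ) P Λ →
      ULLg pr Γ ((x, .withT I As) ::ₘ Δ) (.sel x j P) Λ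
  | copyR : pr Λ → ULLg pr ((u, A) ::ₘ Γ) Δ P ((x, A.dual) ::ₘ Λ) →
      ULLg pr ((u, A) ::ₘ Γ) Δ (.nu x (.out u x P)) Λ
  | copyL : pr Λ → ULLg pr ((u, A) ::ₘ Γ) ((x, A) ::ₘ Δ) P Λ →
      ULLg pr ((u, A) ::ₘ Γ) Δ (.nu x (.out u x P)) Λ
  | bangR : pr {(x, .bang A)} → ULLg pr Γ 0 P {(y, A)} →
      ULLg pr Γ 0 (.rep x y P) {(x, .bang A)}
  | bangL : pr Λ → ULLg pr ((u, A) ::ₘ Γ) Δ P Λ →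
      ULLg pr Γ ((x, .bang A) ::ₘ Δ) (P.subst x u) Λ
  | questR : pr ((x, .quest A.dual) ::ₘ Λ) → ULLg pr ((u, A) ::ₘ Γ) Δ P Λ →
      ULLg pr Γ Δ (P.subst x u) ((x, .quest A.dual) ::ₘ Λ)
  | questL : pr 0 → ULLg pr Γ {(y, A)} P 0 →
      ULLg pr Γ {(x, .quest A)} (.rep x y P) 0
  | cutRL : pr (Λ + Λ') → ULLg pr Γ Δ P ((x, A) ::ₘ Λ) → ULLg pr Γ ((x, A) ::ₘ Δ') Q Λ' →
      ULLg pr Γ (Δ + Δ') (.nu x (.par P Q)) (Λ + Λ')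
  | cutLR : pr (Λ + Λ') → ULLg pr Γ ((x, A) ::ₘ Δ) P Λ → ULLg pr Γ Δ' Q ((x, A) ::ₘ Λ') →
      ULLg pr Γ (Δ + Δ') (.nu x (.par P Q)) (Λ + Λ')
  | cutRR : pr (Λ + Λ') → ULLg pr Γ Δ P ((x, A) ::ₘ Λ) → ULLg pr Γ Δ' Q ((x, A.dual) ::ₘ Λ') →
      ULLg pr Γ (Δ + Δ') (.nu x (.par P Q)) (Λ + Λ')
  | cutLL : pr (Λ + Λ') → ULLg pr Γ ((x, A) ::ₘ Δ) P Λ → ULLg pr Γ ((x, A.dual) ::ₘ Δ') Q Λ' →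
      ULLg pr Γ (Δ + Δ') (.nu x (.par P Q)) (Λ + Λ')
  | cutBangR : pr Λ → ULLg pr ((u, A) ::ₘ Γ) Δ P Λ → ULLg pr Γ 0 Q {(x, A)} →
      ULLg pr Γ Δ (.nu u (.par P (.rep u x Q))) Λ
  | cutBangL : pr Λ → ULLg pr Γ 0 P {(x, A)} → ULLg pr ((u, A) ::ₘ Γ) Δ Q Λ →
      ULLg pr Γ Δ (.nu u (.par (.rep u x P) Q)) Λ
  | cutQuestR : pr Λ → ULLg pr ((u, A) ::ₘ Γ) Δ P Λ → ULLg pr Γ {(x, A.dual)} Q 0 →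
      ULLg pr Γ Δ (.nu u (.par P (.rep u x Q))) Λ
  | cutQuestL : pr Λ → ULLg pr Γ {(x, A.dual)} P 0 → ULLg pr ((u, A) ::ₘ Γ) Δ Q Λ →
      ULLg pr Γ Δ (.nu u (.par (.rep u x P) Q)) Λ

/-- The πULL type system: judgment Γ; Δ ⊢ P :: Λ. -/
abbrev ULL : Ctx → Ctx → Proc → Ctx → Prop := ULLg fun _ => True

/-- Derivability in πULL by a derivation in which every sequent has r-degree 1. -/
abbrev ULL1 : Ctx → Ctx → Proc → Ctx → Prop := ULLg fun Λ => Multiset.card Λ = 1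

/-- The πULL_↷ type system: ∗-marked rules plus the moving rules ↶ and ↷, the
latter enabled only when `mv` holds. -/
inductive ULLmg (mv : Prop) : Ctx → Ctx → Proc → Ctx → Prop where
  | idR : ULLmg mv Γ {(x, A)} (.fwd x y) {(y, A)}
  | oneR : ULLmg mv Γ 0 (.closeS x .nil) {(x, .one)}
  | oneL : ULLmg mv Γ Δ P Λ → ULLmg mv Γ ((x, .one) ::ₘ Δ) (.closeR x P) Λ
  | tensorR : ULLmg mv Γ Δ P ((y, A) ::ₘ Λ) → ULLmg mv Γ Δ' Q ((x, B) ::ₘ Λ') →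
      ULLmg mv Γ (Δ + Δ') (.nu y (.out x y (.par P Q))) ((x, .tensor A B) ::ₘ (Λ + Λ'))
  | tensorL : ULLmg mv Γ ((y, A) ::ₘ (x, B) ::ₘ Δ) P Λ →
      ULLmg mv Γ ((x, .tensor A B) ::ₘ Δ) (.inp x y P) Λ
  | lolliR : ULLmg mv Γ ((y, A) ::ₘ Δ) P ((x, B) ::ₘ Λ) →
      ULLmg mv Γ Δ (.inp x y P) ((x, .lolli A B) ::ₘ Λ)
  | lolliL : ULLmg mv Γ Δ P ((y, A) ::ₘ Λ) → ULLmg mv Γ ((x, B) ::ₘ Δ') Q Λ' →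
      ULLmg mv Γ ((x, .lolli A B) ::ₘ (Δ + Δ')) (.nu y (.out x y (.par P Q))) (Λ + Λ')
  | oplusR : j ∈ I → ULLmg mv Γ Δ P ((x, As j) ::ₘ Λ) →
      ULLmg mv Γ Δ (.sel x j P) ((x, .oplus I As) ::ₘ Λ)
  | oplusL : (∀ i ∈ I, ULLmg mv Γ ((x, As i) ::ₘ Δ) (Ps i) Λ) →
      ULLmg mv Γ ((x, .oplus I As) ::ₘ Δ) (.bra x I Ps) Λ
  | withR : (∀ i ∈ I, ULLmg mv Γ Δ (Ps i) ((x, As i) ::ₘ Λ)) →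
      ULLmg mv Γ Δ (.bra x I Ps) ((x, .withT I As) ::ₘ Λ)
  | withL : j ∈ I → ULLmg mv Γ ((x, As j) ::ₘ Δ) P Λ →
      ULLmg mv Γ ((x, .withT I As) ::ₘ Δ) (.sel x j P) Λ
  | copyL : ULLmg mv ((u, A) ::ₘ Γ) ((x, A) ::ₘ Δ) P Λ →
      ULLmg mv ((u, A) ::ₘ Γ) Δ (.nu x (.out u x P)) Λ
  | bangR : ULLmg mv Γ 0 P {(y, A)} → ULLmg mv Γ 0 (.rep x y P) {(x, .bang A)}
  | bangL : ULLmg mv ((u, A) ::ₘ Γ) Δ P Λ →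
      ULLmg mv Γ ((x, .bang A) ::ₘ Δ) (P.subst x u) Λ
  | cutRL : ULLmg mv Γ Δ P ((x, A) ::ₘ Λ) → ULLmg mv Γ ((x, A) ::ₘ Δ') Q Λ' →
      ULLmg mv Γ (Δ + Δ') (.nu x (.par P Q)) (Λ + Λ')
  | cutLR : ULLmg mv Γ ((x, A) ::ₘ Δ) P Λ → ULLmg mv Γ Δ' Q ((x, A) ::ₘ Λ') →
      ULLmg mv Γ (Δ + Δ') (.nu x (.par P Q)) (Λ + Λ')
  | cutBangR : ULLmg mv ((u, A) ::ₘ Γ) Δ P Λ → ULLmg mv Γ 0 Q {(x, A)} →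
      ULLmg mv Γ Δ (.nu u (.par P (.rep u x Q))) Λ
  | cutBangL : ULLmg mv Γ 0 P {(x, A)} → ULLmg mv ((u, A) ::ₘ Γ) Δ Q Λ →
      ULLmg mv Γ Δ (.nu u (.par (.rep u x P) Q)) Λ
  | moveL : mv → ULLmg mv Γ Δ P ((x, A) ::ₘ Λ) → ULLmg mv Γ ((x, A.dual) ::ₘ Δ) P Λ
  | moveR : mv → ULLmg mv Γ ((x, A) ::ₘ Δ) P Λ → ULLmg mv Γ Δ P ((x, A.dual) ::ₘ Λ)

/-- πULL_↷: judgment Γ; Δ ⊢_↷ P :: Λ. -/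
abbrev ULLm : Ctx → Ctx → Proc → Ctx → Prop := ULLmg True

/-- πULL_↷-derivability never using the moving rules ↶ and ↷
(equivalently: derivability using only the ∗-marked rules). -/
abbrev ULLstar : Ctx → Ctx → Proc → Ctx → Prop := ULLmg False

/-- The πCLL* type system: judgment P ⊢_C Γ; Δ. -/
inductive CLL : Proc → Ctx → Ctx → Prop where
  | id : CLL (.fwd x y) Γ ((x, A) ::ₘ {(y, A.dual)})
  | one : CLL (.closeS x .nil) Γ {(x, .one)}
  | bot : CLL P Γ Δ → CLL (.closeR x P) Γ ((x, .bot) ::ₘ Δ)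
  | tensor : CLL P Γ ((y, A) ::ₘ Δ) → CLL Q Γ ((x, B) ::ₘ Δ') →
      CLL (.nu y (.out x y (.par P Q))) Γ ((x, .tensor A B) ::ₘ (Δ + Δ'))
  | parr : CLL P Γ ((y, A) ::ₘ (x, B) ::ₘ Δ) → CLL (.inp x y P) Γ ((x, A.parr B) ::ₘ Δ)
  | oplus : j ∈ I → CLL P Γ ((x, As j) ::ₘ Δ) →
      CLL (.sel x j P) Γ ((x, .oplus I As) ::ₘ Δ)
  | withR : (∀ i ∈ I, CLL (Ps i) Γ ((x, As i) ::ₘ Δ)) →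
      CLL (.bra x I Ps) Γ ((x, .withT I As) ::ₘ Δ)
  | copy : CLL P ((u, A) ::ₘ Γ) ((y, A) ::ₘ Δ) → CLL (.nu y (.out u y P)) ((u, A) ::ₘ Γ) Δ
  | quest : CLL P ((u, A) ::ₘ Γ) Δ → CLL (P.subst x u) Γ ((x, .quest A) ::ₘ Δ)
  | bang : CLL P Γ {(y, A)} → CLL (.rep x y P) Γ {(x, .bang A)}
  | cut : CLL P Γ ((x, A) ::ₘ Δ) → CLL Q Γ ((x, A.dual) ::ₘ Δ') →
      CLL (.nu x (.par P Q)) Γ (Δ + Δ')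
  | cutQR : CLL P ((u, A) ::ₘ Γ) Δ → CLL Q Γ {(x, A.dual)} →
      CLL (.nu u (.par P (.rep u x Q))) Γ Δ
  | cutQL : CLL P Γ {(x, A.dual)} → CLL Q ((u, A) ::ₘ Γ) Δ →
      CLL (.nu u (.par (.rep u x P) Q)) Γ Δ

/-- πILL propositions: without ⊥ and ?. -/
inductive ITyp : Type where
  | one : ITyp
  | tensor : ITyp → ITyp → ITyp
  | lolli : ITyp → ITyp → ITyp
  | oplus : Finset ℕ → (ℕ → ITyp) → ITyp
  | withT : Finset ℕ → (ℕ → ITyp) → ITyp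
  | bang : ITyp → ITyp

/-- Embedding of πILL propositions into ULL propositions. -/
def ITyp.toSTyp : ITyp → STyp
  | .one => .one
  | .tensor A B => .tensor A.toSTyp B.toSTyp
  | .lolli A B => .lolli A.toSTyp B.toSTyp
  | .oplus I f => .oplus I fun i => (f i).toSTyp
  | .withT I f => .withT I fun i => (f i).toSTyp
  | .bang A => .bang A.toSTyp

abbrev ICtx : Type := Multiset (ℕ × ITyp)

def ICtx.toCtx (Γ : ICtx) : Ctx := Γ.map fun p => (p.1, p.2.toSTyp)

/-- The πILL type system: judgment Γ; Δ ⊢_I P :: z:C (exactly one assignment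
on the right). -/
inductive ILL : ICtx → ICtx → Proc → ℕ → ITyp → Prop where
  | id : ILL Γ {(x, A)} (.fwd x y) y A
  | oneR : ILL Γ 0 (.closeS x .nil) x .one
  | oneL : ILL Γ Δ P z C → ILL Γ ((x, .one) ::ₘ Δ) (.closeR x P) z C
  | tensorR : ILL Γ Δ P y A → ILL Γ Δ' Q x B →
      ILL Γ (Δ + Δ') (.nu y (.out x y (.par P Q))) x (.tensor A B)
  | tensorL : ILL Γ ((y, A) ::ₘ (x, B) ::ₘ Δ) P z C →
      ILL Γ ((x, .tensor A B) ::ₘ Δ) (.inp x y P) z C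
  | lolliR : ILL Γ ((y, A) ::ₘ Δ) P x B → ILL Γ Δ (.inp x y P) x (.lolli A B)
  | lolliL : ILL Γ Δ P y A → ILL Γ ((x, B) ::ₘ Δ') Q z C →
      ILL Γ ((x, .lolli A B) ::ₘ (Δ + Δ')) (.nu y (.out x y (.par P Q))) z C
  | oplusR : j ∈ I → ILL Γ Δ P x (As j) → ILL Γ Δ (.sel x j P) x (.oplus I As)
  | oplusL : (∀ i ∈ I, ILL Γ ((x, As i) ::ₘ Δ) (Ps i) z C) →
      ILL Γ ((x, .oplus I As) ::ₘ Δ) (.bra x I Ps) z C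
  | withR : (∀ i ∈ I, ILL Γ Δ (Ps i) x (As i)) →
      ILL Γ Δ (.bra x I Ps) x (.withT I As)
  | withL : j ∈ I → ILL Γ ((x, As j) ::ₘ Δ) P z C →
      ILL Γ ((x, .withT I As) ::ₘ Δ) (.sel x j P) z C
  | copy : ILL ((u, A) ::ₘ Γ) ((x, A) ::ₘ Δ) P z C →
      ILL ((u, A) ::ₘ Γ) Δ (.nu x (.out u x P)) z C
  | bangR : ILL Γ 0 P y A → ILL Γ 0 (.rep x y P) x (.bang A)
  | bangL : ILL ((u, A) ::ₘ Γ) Δ P z C → ILL Γ ((x, .bang A) ::ₘ Δ) (P.subst x u) z C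
  | cutRL : ILL Γ Δ P x A → ILL Γ ((x, A) ::ₘ Δ') Q z C →
      ILL Γ (Δ + Δ') (.nu x (.par P Q)) z C
  | cutLR : ILL Γ ((x, A) ::ₘ Δ) P z C → ILL Γ Δ' Q x A →
      ILL Γ (Δ + Δ') (.nu x (.par P Q)) z C
  | cutBangR : ILL ((u, A) ::ₘ Γ) Δ P z C → ILL Γ 0 Q x A →
      ILL Γ Δ (.nu u (.par P (.rep u x Q))) z C
  | cutBangL : ILL Γ 0 P x A → ILL ((u, A) ::ₘ Γ) Δ Q z C →
      ILL Γ Δ (.nu u (.par (.rep u x P) Q)) z C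
/-! Every rule of πULL outside the ∗-fragment is the ∗-rule of the dual connective (⊥ for 1,
⅋ for ⊸, ? for !, and the cuts with the cut channel on the same side) followed or preceded by
the moving rules, which trade an assignment x : A on one side of the sequent for x : dual(A) on
the other; since duality is an involution, this translates πULL derivations rule by rule. -/

@[simp]
theorem STyp.dual_dual (A : STyp) : A.dual.dual = A := by
  induction A <;> simp_all [STyp.dual]

namespace ULLm

variable {Γ Δ Δ' Λ Λ' : Ctx} {P Q : Proc} {x y u : ℕ} {A B : STyp}

theorem moveL_dual (h : ULLm Γ Δ P ((x, A.dual) ::ₘ Λ)) : ULLm Γ ((x, A) ::ₘ Δ) P Λ := by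
  simpa using ULLmg.moveL trivial h

theorem moveR_dual (h : ULLm Γ ((x, A.dual) ::ₘ Δ) P Λ) : ULLm Γ Δ P ((x, A) ::ₘ Λ) := by
  simpa using ULLmg.moveR trivial h

theorem idL : ULLm Γ {(x, A), (y, A.dual)} (.fwd x y) 0 := by
  rw [Multiset.pair_comm]
  exact .moveL trivial .idR

theorem botR (h : ULLm Γ Δ P Λ) : ULLm Γ Δ (.closeR x P) ((x, .bot) ::ₘ Λ) :=
  .moveR trivial (.oneL h)

theorem botL : ULLm Γ {(x, .bot)} (.closeS x .nil) 0 :=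
  .moveL trivial .oneR

theorem parrR (h : ULLm Γ Δ P ((y, A) ::ₘ (x, B) ::ₘ Λ)) :
    ULLm Γ Δ (.inp x y P) ((x, A.parr B) ::ₘ Λ) :=
  .lolliR (.moveL trivial h)

theorem parrL (hP : ULLm Γ ((y, A) ::ₘ Δ) P Λ) (hQ : ULLm Γ ((x, B) ::ₘ Δ') Q Λ') :
    ULLm Γ ((x, A.parr B) ::ₘ (Δ + Δ')) (.nu y (.out x y (.par P Q))) (Λ + Λ') :=
  .lolliL (.moveR trivial hP) hQ

theorem copyR (h : ULLm ((u, A) ::ₘ Γ) Δ P ((x, A.dual) ::ₘ Λ)) :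
    ULLm ((u, A) ::ₘ Γ) Δ (.nu x (.out u x P)) Λ :=
  .copyL (moveL_dual h)

theorem questR (h : ULLm ((u, A) ::ₘ Γ) Δ P Λ) :
    ULLm Γ Δ (P.subst x u) ((x, .quest A.dual) ::ₘ Λ) :=
  .moveR trivial (.bangL h)

theorem questL (h : ULLm Γ {(y, A)} P 0) : ULLm Γ {(x, .quest A)} (.rep x y P) 0 :=
  moveL_dual (A := .quest A) (.bangR (.moveR trivial h))

theorem cutRR (hP : ULLm Γ Δ P ((x, A) ::ₘ Λ)) (hQ : ULLm Γ Δ' Q ((x, A.dual) ::ₘ Λ')) :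
    ULLm Γ (Δ + Δ') (.nu x (.par P Q)) (Λ + Λ') :=
  .cutRL hP (moveL_dual hQ)

theorem cutLL (hP : ULLm Γ ((x, A) ::ₘ Δ) P Λ) (hQ : ULLm Γ ((x, A.dual) ::ₘ Δ') Q Λ') :
    ULLm Γ (Δ + Δ') (.nu x (.par P Q)) (Λ + Λ') :=
  .cutLR hP (moveR_dual hQ)

theorem cutQuestR (hP : ULLm ((u, A) ::ₘ Γ) Δ P Λ) (hQ : ULLm Γ {(x, A.dual)} Q 0) :
    ULLm Γ Δ (.nu u (.par P (.rep u x Q))) Λ :=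
  .cutBangR hP (moveR_dual hQ)

theorem cutQuestL (hP : ULLm Γ {(x, A.dual)} P 0) (hQ : ULLm ((u, A) ::ₘ Γ) Δ Q Λ) :
    ULLm Γ Δ (.nu u (.par (.rep u x P) Q)) Λ :=
  .cutBangL (moveR_dual hP) hQ

end ULLm

theorem ULLg.toULLm {pr : Ctx → Prop} {Γ Δ Λ : Ctx} {P : Proc} (h : ULLg pr Γ Δ P Λ) :
    ULLm Γ Δ P Λ := by
  induction h with
  | idR _ => exact .idR
  | idL _ => exact ULLm.idL
  | oneR _ => exact .oneR
  | oneL _ _ ih => exact .oneL ih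
  | botR _ _ ih => exact ih.botR
  | botL _ => exact ULLm.botL
  | tensorR _ _ _ ihP ihQ => exact .tensorR ihP ihQ
  | tensorL _ _ ih => exact .tensorL ih
  | parrR _ _ ih => exact ih.parrR
  | parrL _ _ _ ihP ihQ => exact ihP.parrL ihQ
  | lolliR _ _ ih => exact .lolliR ih
  | lolliL _ _ _ ihP ihQ => exact .lolliL ihP ihQ
  | oplusR _ hj _ ih => exact .oplusR hj ih
  | oplusL _ _ ih => exact .oplusL ih
  | withR _ _ ih => exact .withR ih
  | withL _ hj _ ih => exact .withL hj ih
  | copyR _ _ ih => exact ih.copyR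
  | copyL _ _ ih => exact .copyL ih
  | bangR _ _ ih => exact .bangR ih
  | bangL _ _ ih => exact .bangL ih
  | questR _ _ ih => exact ih.questR
  | questL _ _ ih => exact ih.questL
  | cutRL _ _ _ ihP ihQ => exact .cutRL ihP ihQ
  | cutLR _ _ _ ihP ihQ => exact .cutLR ihP ihQ
  | cutRR _ _ _ ihP ihQ => exact ihP.cutRR ihQ
  | cutLL _ _ _ ihP ihQ => exact ihP.cutLL ihQ
  | cutBangR _ _ _ ihP ihQ => exact .cutBangR ihP ihQ
  | cutBangL _ _ _ ihP ihQ => exact .cutBangL ihP ihQ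
  | cutQuestR _ _ _ ihP ihQ => exact ihP.cutQuestR ihQ
  | cutQuestL _ _ _ ihP ihQ => exact ihP.cutQuestL ihQ

/-- Every non-∗-marked rule of πULL is admissible or derivable
in πULL_↷: πULL-derivability implies πULL_↷-derivability. -/
theorem ull_admissible_in_ullm {Γ Δ Λ : Ctx} {P : Proc}
    (h : ULL Γ Δ P Λ) : ULLm Γ Δ P Λ :=
  h.toULLm
end

section
/- Translation from πCLL* to πULL_↷: if P ⊢_C Γ; Δ is derivable in πCLL*, then dual(Γ); ∅ ⊢_↷ P :: Δ is derivable in πULL_↷. -/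
@[simp]
theorem Ctx.dual_cons (x : ℕ) (A : STyp) (Γ : Ctx) :
    Ctx.dual ((x, A) ::ₘ Γ) = (x, A.dual) ::ₘ Ctx.dual Γ :=
  Multiset.map_cons _ _ _

theorem ULLm.move_right {Γ Δ Λ : Ctx} {P : Proc} {x : ℕ} {A : STyp}
    (h : ULLm Γ ((x, A.dual) ::ₘ Δ) P Λ) : ULLm Γ Δ P ((x, A) ::ₘ Λ) := by
  simpa only [STyp.dual_dual] using ULLmg.moveR trivial h

theorem ULLm.move_left {Γ Δ Λ : Ctx} {P : Proc} {x : ℕ} {A : STyp}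
    (h : ULLm Γ Δ P ((x, A.dual) ::ₘ Λ)) : ULLm Γ ((x, A) ::ₘ Δ) P Λ := by
  simpa only [STyp.dual_dual] using ULLmg.moveL trivial h

/-- Translation from πCLL* to πULL_↷. -/
theorem cll_to_ullm {Γ Δ : Ctx} {P : Proc}
    (h : CLL P Γ Δ) : ULLm (Ctx.dual Γ) 0 P Δ := by
  induction h with
  | id => exact ULLm.move_right ULLmg.idR
  | one => exact ULLmg.oneR
  | bot _ ih => exact ULLmg.moveR trivial (ULLmg.oneL ih)
  | tensor _ _ ih₁ ih₂ => simpa only [zero_add] using ULLmg.tensorR ih₁ ih₂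
  | parr _ ih => exact ULLmg.lolliR (ULLmg.moveL trivial ih)
  | oplus hj _ ih => exact ULLmg.oplusR hj ih
  | withR _ ih => exact ULLmg.withR ih
  | copy _ ih =>
      rw [Ctx.dual_cons] at ih ⊢
      exact ULLmg.copyL (ULLmg.moveL trivial ih)
  | quest _ ih =>
      rw [Ctx.dual_cons] at ih
      exact ULLm.move_right (A := .quest _) (ULLmg.bangL ih)
  | bang _ ih => exact ULLmg.bangR ih
  | cut _ _ ih₁ ih₂ => simpa only [zero_add] using ULLmg.cutRL ih₁ (ULLm.move_left ih₂)
  | cutQR _ _ ih₁ ih₂ =>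
      rw [Ctx.dual_cons] at ih₁
      exact ULLmg.cutBangR ih₁ ih₂
  | cutQL _ _ ih₁ ih₂ =>
      rw [Ctx.dual_cons] at ih₂
      exact ULLmg.cutBangL ih₁ ih₂
end

section
/- Characterization of πILL inside πULL (items 1 and 2 of the paper's equivalence): for any process P, there exist Γ, Δ, x, A such that Γ; Δ ⊢_I P :: x:A is derivable in πILL if and only if there exist Γ, Δ, Λ such that Γ; Δ ⊢ P :: Λ has a πULL derivation in which every sequent has r-degree 1. -/
namespace ProofAux

/-- Collapse of ULL types into ILL types (⊥ ↦ 1, ? ↦ !). -/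
def tS : STyp → ITyp
  | .one => .one
  | .bot => .one
  | .tensor A B => .tensor (tS A) (tS B)
  | .lolli A B => .lolli (tS A) (tS B)
  | .oplus I f => .oplus I fun i => tS (f i)
  | .withT I f => .withT I fun i => tS (f i)
  | .bang A => .bang (tS A)
  | .quest A => .bang (tS A)

def tC (Δ : Ctx) : ICtx := Δ.map fun p => (p.1, tS p.2)

@[simp] lemma tC_zero : tC 0 = 0 := rfl
@[simp] lemma tC_cons (x A Δ) : tC ((x, A) ::ₘ Δ) = (x, tS A) ::ₘ tC Δ :=
  Multiset.map_cons _ _ _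
@[simp] lemma tC_add (Δ Δ') : tC (Δ + Δ') = tC Δ + tC Δ' :=
  Multiset.map_add _ _ _
@[simp] lemma tC_singleton (x A) : tC {(x, A)} = {(x, tS A)} := rfl

@[simp] lemma toCtx_zero : ICtx.toCtx 0 = 0 := rfl
@[simp] lemma toCtx_cons (x A Δ) :
    ICtx.toCtx ((x, A) ::ₘ Δ) = (x, A.toSTyp) ::ₘ ICtx.toCtx Δ :=
  Multiset.map_cons _ _ _
@[simp] lemma toCtx_add (Δ Δ') : ICtx.toCtx (Δ + Δ') = ICtx.toCtx Δ + ICtx.toCtx Δ' :=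
  Multiset.map_add _ _ _
@[simp] lemma toCtx_singleton (x A) : ICtx.toCtx {(x, A)} = {(x, A.toSTyp)} := rfl

lemma cons_eq_singleton {α} {a b : α} {s : Multiset α} (h : a ::ₘ s = {b}) :
    a = b ∧ s = 0 := by
  have hc := congrArg Multiset.card h
  simp at hc
  subst hc
  exact ⟨Multiset.singleton_inj.mp h, rfl⟩

lemma cons_eq_singleton' {α β} {a1 b1 : α} {a2 b2 : β} {s : Multiset (α × β)}
    (h : (a1, a2) ::ₘ s = {(b1, b2)}) : a1 = b1 ∧ a2 = b2 ∧ s = 0 := by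
  obtain ⟨he, hs⟩ := cons_eq_singleton h
  exact ⟨congrArg Prod.fst he, congrArg Prod.snd he, hs⟩

lemma single_eq_single {α β} {a1 b1 : α} {a2 b2 : β}
    (h : ({(a1, a2)} : Multiset (α × β)) = {(b1, b2)}) : a1 = b1 ∧ a2 = b2 := by
  have he := Multiset.singleton_inj.mp h
  exact ⟨congrArg Prod.fst he, congrArg Prod.snd he⟩

lemma ill_to_ull1 {Γ Δ : ICtx} {P x A} (h : ILL Γ Δ P x A) :
    ULL1 Γ.toCtx Δ.toCtx P {(x, A.toSTyp)} := by
  induction h with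
  | id => simpa using ULLg.idR (by simp)
  | oneR => simpa [ITyp.toSTyp] using ULLg.oneR (by simp)
  | oneL h ih => simpa [ITyp.toSTyp] using ULLg.oneL (by simp) ih
  | tensorR h1 h2 ih1 ih2 =>
      simpa [ITyp.toSTyp] using ULLg.tensorR (by simp) ih1 ih2
  | tensorL h ih => simpa [ITyp.toSTyp] using ULLg.tensorL (by simp) (by simpa using ih)
  | lolliR h ih => simpa [ITyp.toSTyp, Multiset.cons_zero] using ULLg.lolliR (Λ := 0) (by simp) (by simpa using ih)
  | lolliL h1 h2 ih1 ih2 =>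
      simpa [ITyp.toSTyp] using ULLg.lolliL (Λ := 0) (by simp) ih1 (by simpa using ih2)
  | oplusR hj h ih => simpa [ITyp.toSTyp, Multiset.cons_zero] using ULLg.oplusR (Λ := 0) (by simp) hj ih
  | oplusL h ih =>
      simpa [ITyp.toSTyp] using ULLg.oplusL (by simp) (fun i hi => by simpa using ih i hi)
  | withR h ih =>
      simpa [ITyp.toSTyp, Multiset.cons_zero] using ULLg.withR (Λ := 0) (by simp) (fun i hi => by simpa using ih i hi)
  | withL hj h ih => simpa [ITyp.toSTyp] using ULLg.withL (by simp) hj (by simpa using ih)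
  | copy h ih => simpa using ULLg.copyL (by simp) (by simpa using ih)
  | bangR h ih => simpa [ITyp.toSTyp] using ULLg.bangR (by simp) (by simpa using ih)
  | bangL h ih => simpa [ITyp.toSTyp] using ULLg.bangL (by simp) (by simpa using ih)
  | cutRL h1 h2 ih1 ih2 =>
      simpa using ULLg.cutRL (Λ := 0) (by simp) ih1 (by simpa using ih2)
  | cutLR h1 h2 ih1 ih2 =>
      simpa using ULLg.cutLR (Λ' := 0) (by simp) (by simpa using ih1) ih2
  | cutBangR h1 h2 ih1 ih2 =>
      simpa using ULLg.cutBangR (by simp) (by simpa using ih1) (by simpa using ih2)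
  | cutBangL h1 h2 ih1 ih2 =>
      simpa using ULLg.cutBangL (by simp) (by simpa using ih1) (by simpa using ih2)

lemma ull1_to_ill {Γ Δ : Ctx} {P Λ} (h : ULL1 Γ Δ P Λ) :
    ∃ x A, Λ = {(x, A)} ∧ ILL (tC Γ) (tC Δ) P x (tS A) := by
  induction h with
  | idR hpr => exact ⟨_, _, rfl, by simpa using ILL.id⟩
  | idL hpr => simp at hpr
  | oneR hpr => exact ⟨_, _, rfl, by simpa [tS] using ILL.oneR⟩
  | oneL hpr h ih =>
      obtain ⟨x1, A1, rfl, d⟩ := ih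
      exact ⟨_, _, rfl, by simpa [tS] using ILL.oneL d⟩
  | botR hpr h ih =>
      obtain ⟨x1, A1, rfl, d⟩ := ih
      simp at hpr
  | botL hpr => simp at hpr
  | tensorR hpr h1 h2 ih1 ih2 =>
      obtain ⟨x1, A1, e1, d1⟩ := ih1
      obtain ⟨x2, A2, e2, d2⟩ := ih2
      obtain ⟨rfl, rfl, rfl⟩ := cons_eq_singleton' e1
      obtain ⟨rfl, rfl, rfl⟩ := cons_eq_singleton' e2
      exact ⟨_, _, rfl, by simpa [tS] using ILL.tensorR d1 d2⟩
  | tensorL hpr h ih =>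
      obtain ⟨x1, A1, rfl, d⟩ := ih
      exact ⟨_, _, rfl, by simpa [tS] using ILL.tensorL (by simpa using d)⟩
  | parrR hpr h ih =>
      obtain ⟨x1, A1, e, d⟩ := ih
      have := congrArg Multiset.card e
      simp at this
  | parrL hpr h1 h2 ih1 ih2 =>
      obtain ⟨x1, A1, rfl, d1⟩ := ih1
      obtain ⟨x2, A2, rfl, d2⟩ := ih2
      simp at hpr
  | lolliR hpr h ih =>
      obtain ⟨x1, A1, e, d⟩ := ih
      obtain ⟨rfl, rfl, rfl⟩ := cons_eq_singleton' e
      exact ⟨_, _, rfl, by simpa [tS] using ILL.lolliR (by simpa using d)⟩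
  | lolliL hpr h1 h2 ih1 ih2 =>
      obtain ⟨x1, A1, e1, d1⟩ := ih1
      obtain ⟨x2, A2, rfl, d2⟩ := ih2
      obtain ⟨rfl, rfl, rfl⟩ := cons_eq_singleton' e1
      exact ⟨_, _, rfl, by simpa [tS] using ILL.lolliL d1 (by simpa using d2)⟩
  | oplusR hpr hj h ih =>
      obtain ⟨x1, A1, e, d⟩ := ih
      obtain ⟨rfl, rfl, rfl⟩ := cons_eq_singleton' e
      exact ⟨_, _, rfl, by simpa [tS] using ILL.oplusR hj d⟩
  | oplusL hpr h ih =>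
      obtain ⟨⟨z, C⟩, rfl⟩ := Multiset.card_eq_one.mp hpr
      refine ⟨z, C, rfl, ?_⟩
      simp only [tC_cons, tS]
      refine ILL.oplusL fun i hi => ?_
      obtain ⟨x1, A1, e, d⟩ := ih i hi
      obtain ⟨rfl, rfl⟩ := single_eq_single e
      simpa using d
  | withR hpr h ih =>
      have hL := Multiset.card_eq_zero.mp (by simpa using hpr)
      subst hL
      refine ⟨_, _, rfl, ?_⟩
      simp only [tS]
      refine ILL.withR fun i hi => ?_
      obtain ⟨x1, A1, e, d⟩ := ih i hi
      obtain ⟨rfl, rfl, -⟩ := cons_eq_singleton' e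
      exact d
  | withL hpr hj h ih =>
      obtain ⟨x1, A1, rfl, d⟩ := ih
      exact ⟨_, _, rfl, by simpa [tS] using ILL.withL hj (by simpa using d)⟩
  | copyR hpr h ih =>
      obtain ⟨x1, A1, e, d⟩ := ih
      obtain ⟨-, -, rfl⟩ := cons_eq_singleton' e
      simp at hpr
  | copyL hpr h ih =>
      obtain ⟨x1, A1, rfl, d⟩ := ih
      exact ⟨_, _, rfl, by simpa using ILL.copy (by simpa using d)⟩
  | bangR hpr h ih =>
      obtain ⟨x1, A1, e, d⟩ := ih
      obtain ⟨rfl, rfl⟩ := single_eq_single e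
      exact ⟨_, _, rfl, by simpa [tS] using ILL.bangR (by simpa using d)⟩
  | bangL hpr h ih =>
      obtain ⟨x1, A1, rfl, d⟩ := ih
      exact ⟨_, _, rfl, by simpa [tS] using ILL.bangL (by simpa using d)⟩
  | questR hpr h ih =>
      obtain ⟨x1, A1, rfl, d⟩ := ih
      simp at hpr
  | questL hpr h ih => simp at hpr
  | cutRL hpr h1 h2 ih1 ih2 =>
      obtain ⟨x1, A1, e1, d1⟩ := ih1
      obtain ⟨x2, A2, rfl, d2⟩ := ih2
      obtain ⟨rfl, rfl, rfl⟩ := cons_eq_singleton' e1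
      exact ⟨_, _, rfl, by simpa using ILL.cutRL d1 (by simpa using d2)⟩
  | cutLR hpr h1 h2 ih1 ih2 =>
      obtain ⟨x1, A1, rfl, d1⟩ := ih1
      obtain ⟨x2, A2, e2, d2⟩ := ih2
      obtain ⟨rfl, rfl, rfl⟩ := cons_eq_singleton' e2
      exact ⟨_, _, rfl, by simpa using ILL.cutLR (by simpa using d1) d2⟩
  | cutRR hpr h1 h2 ih1 ih2 =>
      obtain ⟨x1, A1, e1, d1⟩ := ih1
      obtain ⟨x2, A2, e2, d2⟩ := ih2
      obtain ⟨-, -, rfl⟩ := cons_eq_singleton' e1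
      obtain ⟨-, -, rfl⟩ := cons_eq_singleton' e2
      simp at hpr
  | cutLL hpr h1 h2 ih1 ih2 =>
      obtain ⟨x1, A1, rfl, d1⟩ := ih1
      obtain ⟨x2, A2, rfl, d2⟩ := ih2
      simp at hpr
  | cutBangR hpr h1 h2 ih1 ih2 =>
      obtain ⟨x1, A1, rfl, d1⟩ := ih1
      obtain ⟨x2, A2, e2, d2⟩ := ih2
      obtain ⟨rfl, rfl⟩ := single_eq_single e2
      exact ⟨_, _, rfl, ILL.cutBangR (by simpa using d1) (by simpa using d2)⟩
  | cutBangL hpr h1 h2 ih1 ih2 =>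
      obtain ⟨x1, A1, e1, d1⟩ := ih1
      obtain ⟨x2, A2, rfl, d2⟩ := ih2
      obtain ⟨rfl, rfl⟩ := single_eq_single e1
      exact ⟨_, _, rfl, ILL.cutBangL (by simpa using d1) (by simpa using d2)⟩
  | cutQuestR hpr h1 h2 ih1 ih2 =>
      obtain ⟨x2, A2, e2, d2⟩ := ih2
      exact absurd (congrArg Multiset.card e2) (by simp)
  | cutQuestL hpr h1 h2 ih1 ih2 =>
      obtain ⟨x1, A1, e1, d1⟩ := ih1
      exact absurd (congrArg Multiset.card e1) (by simp)

end ProofAux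

/-- Characterization of πILL inside πULL: P is πILL-typable iff
P has a πULL typing with a derivation in which every sequent has r-degree 1. -/
theorem ill_iff_ull_rdegree_one (P : Proc) :
    (∃ (Γ Δ : ICtx) (x : ℕ) (A : ITyp), ILL Γ Δ P x A) ↔
    (∃ (Γ Δ Λ : Ctx), ULL1 Γ Δ P Λ) := by
  constructor
  · rintro ⟨Γ, Δ, x, A, h⟩
    exact ⟨Γ.toCtx, Δ.toCtx, {(x, A.toSTyp)}, ProofAux.ill_to_ull1 h⟩
  · rintro ⟨Γ, Δ, Λ, h⟩
    obtain ⟨x, A, -, d⟩ := ProofAux.ull1_to_ill h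
    exact ⟨ProofAux.tC Γ, ProofAux.tC Δ, x, ProofAux.tS A, d⟩
end

section
/- The class of πILL-typable processes is strictly included in the class of πULL-typable processes: I ⊊ U, where I is the set of processes P such that Γ; Δ ⊢_I P :: x:A is derivable in πILL for some Γ, Δ, x, A, and U is the set of processes P such that Γ; Δ ⊢ P :: Λ is derivable in πULL for some Γ, Δ, Λ. -/
/- ===== Auxiliary lemmas ===== -/

lemma ICtx.toCtx_zero : ICtx.toCtx 0 = 0 := rfl

lemma ICtx.toCtx_cons (p : ℕ × ITyp) (Γ : ICtx) :
    ICtx.toCtx (p ::ₘ Γ) = (p.1, p.2.toSTyp) ::ₘ Γ.toCtx := Multiset.map_cons _ _ _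

lemma ICtx.toCtx_add (Γ Δ : ICtx) : ICtx.toCtx (Γ + Δ) = Γ.toCtx + Δ.toCtx :=
  Multiset.map_add _ _ _

lemma ICtx.toCtx_singleton (p : ℕ × ITyp) :
    ICtx.toCtx {p} = {(p.1, p.2.toSTyp)} := rfl

/-- Every πILL derivation embeds into πULL. -/
lemma ill_to_ull {Γ Δ : ICtx} {P : Proc} {x : ℕ} {A : ITyp} (h : ILL Γ Δ P x A) :
    ULL Γ.toCtx Δ.toCtx P {(x, A.toSTyp)} := by
  induction h with
  | @id Γ x A y =>
      rw [ICtx.toCtx_singleton]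
      exact ULLg.idR trivial
  | oneR => exact ULLg.oneR trivial
  | oneL h ih =>
      rw [ICtx.toCtx_cons]
      exact ULLg.oneL trivial ih
  | tensorR h1 h2 ih1 ih2 =>
      rw [ICtx.toCtx_add]
      simpa [ITyp.toSTyp] using ULLg.tensorR trivial ih1 ih2
  | tensorL h ih =>
      rw [ICtx.toCtx_cons]
      refine ULLg.tensorL trivial ?_
      simpa [ICtx.toCtx_cons] using ih
  | lolliR h ih =>
      refine ULLg.lolliR trivial ?_
      simpa [ICtx.toCtx_cons] using ih
  | lolliL h1 h2 ih1 ih2 =>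
      rw [ICtx.toCtx_cons, ICtx.toCtx_add]
      have := ULLg.lolliL (pr := fun _ => True) trivial ih1 (by simpa [ICtx.toCtx_cons] using ih2)
      simpa [ITyp.toSTyp] using this
  | oplusR hj h ih =>
      exact ULLg.oplusR trivial hj ih
  | oplusL h ih =>
      rw [ICtx.toCtx_cons]
      refine ULLg.oplusL trivial ?_
      intro i hi
      simpa [ICtx.toCtx_cons] using ih i hi
  | withR h ih =>
      exact ULLg.withR trivial (fun i hi => ih i hi)
  | withL hj h ih =>
      rw [ICtx.toCtx_cons]
      refine ULLg.withL trivial hj ?_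
      simpa [ICtx.toCtx_cons] using ih
  | copy h ih =>
      rw [ICtx.toCtx_cons]
      refine ULLg.copyL trivial ?_
      simpa [ICtx.toCtx_cons] using ih
  | bangR h ih =>
      exact ULLg.bangR trivial ih
  | bangL h ih =>
      rw [ICtx.toCtx_cons]
      refine ULLg.bangL trivial ?_
      simpa [ICtx.toCtx_cons] using ih
  | cutRL h1 h2 ih1 ih2 =>
      rw [ICtx.toCtx_add]
      have := ULLg.cutRL (pr := fun _ => True) trivial ih1 (by simpa [ICtx.toCtx_cons] using ih2)
      simpa using this
  | cutLR h1 h2 ih1 ih2 =>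
      rw [ICtx.toCtx_add]
      have := ULLg.cutLR (pr := fun _ => True) trivial (by simpa [ICtx.toCtx_cons] using ih1) ih2
      simpa using this
  | cutBangR h1 h2 ih1 ih2 =>
      refine ULLg.cutBangR trivial ?_ ih2
      simpa [ICtx.toCtx_cons] using ih1
  | cutBangL h1 h2 ih1 ih2 =>
      refine ULLg.cutBangL trivial ih1 ?_
      simpa [ICtx.toCtx_cons] using ih2

/-- In πILL, a process of the form x().P always has nonempty linear left context. -/
lemma ill_closeR_left_ne_zero {Γ Δ : ICtx} {P : Proc} {z : ℕ} {C : ITyp}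
    (h : ILL Γ Δ P z C) : ∀ c Q, P = .closeR c Q → Δ ≠ 0 := by
  cases h <;> intro c Q hP <;> simp_all

lemma subst_eq_rep {P : Proc} {y x a b : ℕ} {Q : Proc}
    (h : P.subst y x = .rep a b Q) :
    ∃ a' Q', P = .rep a' b Q' ∧ (Q = Q' ∨ Q = Q'.subst y x) := by
  cases P <;> simp only [Proc.subst] at h <;> try exact absurd h (by simp)
  case nu a0 P0 => split at h <;> exact absurd h (by simp)
  case inp a0 b0 P0 => split at h <;> exact absurd h (by simp)
  case rep a0 b0 P0 =>
    split at h
    · injection h with h1 h2 h3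
      subst h2
      exact ⟨a0, P0, rfl, Or.inl h3.symm⟩
    · injection h with h1 h2 h3
      subst h2
      exact ⟨a0, P0, rfl, Or.inr h3.symm⟩

lemma subst_eq_closeR {P : Proc} {y x c : ℕ} {Q : Proc}
    (h : P.subst y x = .closeR c Q) : ∃ c' Q', P = .closeR c' Q' := by
  cases P <;> simp only [Proc.subst] at h
  case closeR c0 P0 => exact ⟨c0, P0, rfl⟩
  case inp a0 b0 P0 => split at h <;> exact absurd h (by simp)
  case rep a0 b0 P0 => split at h <;> exact absurd h (by simp)
  case nu a0 P0 => split at h <;> exact absurd h (by simp)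
  all_goals exact absurd h (by simp)

/-- No πILL derivation types a process of the form !a(b).c().Q. -/
lemma ill_not_rep_closeR {Γ Δ : ICtx} {R : Proc} {z : ℕ} {C : ITyp}
    (h : ILL Γ Δ R z C) : ∀ a b c Q, R = .rep a b (.closeR c Q) → False := by
  induction h with
  | bangR h ih =>
      intro a b c Q hR
      injection hR with h1 h2 h3
      exact ill_closeR_left_ne_zero (h3 ▸ h) c Q rfl rfl
  | bangL h ih =>
      intro a b c Q hR
      obtain ⟨a', Q', hP, hQ⟩ := subst_eq_rep hR
      rcases hQ with hQ | hQ
      · exact ih a' b c Q (by rw [hP, hQ])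
      · obtain ⟨c', Q'', hQ'⟩ := subst_eq_closeR hQ.symm
        exact ih a' b c' Q'' (by rw [hP, hQ'])
  | id => intro a b c Q hR; simp at hR
  | oneR => intro a b c Q hR; simp at hR
  | oneL h ih => intro a b c Q hR; simp at hR
  | tensorR h1 h2 ih1 ih2 => intro a b c Q hR; simp at hR
  | tensorL h ih => intro a b c Q hR; simp at hR
  | lolliR h ih => intro a b c Q hR; simp at hR
  | lolliL h1 h2 ih1 ih2 => intro a b c Q hR; simp at hR
  | oplusR hj h ih => intro a b c Q hR; simp at hR
  | oplusL h ih => intro a b c Q hR; simp at hR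
  | withR h ih => intro a b c Q hR; simp at hR
  | withL hj h ih => intro a b c Q hR; simp at hR
  | copy h ih => intro a b c Q hR; simp at hR
  | cutRL h1 h2 ih1 ih2 => intro a b c Q hR; simp at hR
  | cutLR h1 h2 ih1 ih2 => intro a b c Q hR; simp at hR
  | cutBangR h1 h2 ih1 ih2 => intro a b c Q hR; simp at hR
  | cutBangL h1 h2 ih1 ih2 => intro a b c Q hR; simp at hR

/-- The separating witness: !u(y). y(). ν x (ū⟨x⟩. x̄⟨⟩.0), ULL-typable via ?L, ⊥L etc. -/
def sepW : Proc := .rep 0 1 (.closeR 1 (.nu 2 (.out 3 2 (.closeS 2 .nil))))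

lemma sepW_in_U : ∃ Γ Δ Λ : Ctx, ULL Γ Δ sepW Λ := by
  refine ⟨(3, .bot) ::ₘ 0, {(0, .quest .one)}, 0, ?_⟩
  apply ULLg.questL trivial
  apply ULLg.oneL trivial
  exact ULLg.copyR (A := STyp.bot) trivial (ULLg.oneR trivial)

/-- I ⊊ U. -/
theorem I_ssubset_U :
    {P : Proc | ∃ (Γ Δ : ICtx) (x : ℕ) (A : ITyp), ILL Γ Δ P x A} ⊂
    {P : Proc | ∃ (Γ Δ Λ : Ctx), ULL Γ Δ P Λ} := by
  rw [Set.ssubset_def]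
  constructor
  · rintro P ⟨Γ, Δ, x, A, h⟩
    exact ⟨_, _, _, ill_to_ull h⟩
  · intro hsub
    obtain ⟨Γ, Δ, x, A, h⟩ := hsub sepW_in_U
    exact ill_not_rep_closeR h 0 1 1 _ rfl
end
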